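/- Let C be a linear code over F_p, ≻ a monomial order on K[x_1,…,x_n], G a Gröbner basis of the code ideal I(C), and t the error-correcting capability. If w = c + e with c ∈ C and wt(e) ≤ t, and the remainder of x^w on division by G is a standard monomial x^f with wt(f) > t, then the monomial x^e belongs to the leading ideal lt_≻(I(C)). -/

import Mathlib

open MvPolynomial

/-- Exponent vector in {0,…,p−1}^n ⊆ ℕ^n of a word over F_p. -/
noncomputable def toExp {p n : ℕ} (c : Fin n → ZMod p) : Fin n →₀ ℕ :=
  Finsupp.equivFunOnFinite.symm fun i => (c i).val

/-- The code ideal I(C) = ⟨x^a − x^b : a − b ∈ C⟩ + ⟨x_i^p − 1⟩. -/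
noncomputable def codeIdeal (p : ℕ) (K : Type*) [Field K] {n : ℕ}
    (C : Submodule (ZMod p) (Fin n → ZMod p)) : Ideal (MvPolynomial (Fin n) K) :=
  Ideal.span
    ({f | ∃ a b : Fin n →₀ ℕ,
        (fun i => ((a i : ZMod p) - (b i : ZMod p))) ∈ C ∧
        f = monomial a (1 : K) - monomial b 1} ∪
     {f | ∃ i : Fin n, f = X i ^ p - 1})

/-- `d` is the leading exponent of `f` w.r.t. the monomial order `le`. -/
def IsLeadExp {σ K : Type*} [CommSemiring K] (le : (σ →₀ ℕ) → (σ →₀ ℕ) → Prop)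
    (f : MvPolynomial σ K) (d : σ →₀ ℕ) : Prop :=
  d ∈ f.support ∧ ∀ e ∈ f.support, le e d

/-- Leading ideal of `I` w.r.t. the monomial order `le`. -/
noncomputable def leadIdeal {σ K : Type*} [CommSemiring K]
    (le : (σ →₀ ℕ) → (σ →₀ ℕ) → Prop) (I : Ideal (MvPolynomial σ K)) :
    Ideal (MvPolynomial σ K) :=
  Ideal.span {q | ∃ f ∈ I, ∃ d, IsLeadExp le f d ∧ q = monomial d (1 : K)}

/-!
Since `c ∈ C`, the binomial `x^w - x^e` lies in `I(C)`, hence so does `x^e - x^f`. The weight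
bounds give `e ≠ f`, so one of the two exponents leads this binomial, and it cannot be `f`
because `x^f` is standard.
-/

section Binomial

variable {σ K : Type*} [CommRing K] [Nontrivial K] {le : (σ →₀ ℕ) → (σ →₀ ℕ) → Prop}
  {a b : σ →₀ ℕ}

theorem isLeadExp_monomial_sub_monomial (hab : a ≠ b) (hba : le b a) (haa : le a a) :
    IsLeadExp le (monomial a (1 : K) - monomial b 1) a := by
  classical
  refine ⟨?_, fun d hd => ?_⟩
  · simp [mem_support_iff, coeff_monomial, hab.symm]
  · rcases Finset.mem_union.mp (support_sub σ _ _ hd) with hd | hd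
    · rwa [Finset.mem_singleton.mp (support_monomial_subset hd)]
    · rwa [Finset.mem_singleton.mp (support_monomial_subset hd)]

theorem monomial_mem_leadIdeal_of_sub_mem {I : Ideal (MvPolynomial σ K)}
    (hI : monomial a (1 : K) - monomial b 1 ∈ I) (hab : a ≠ b) (hba : le b a) (haa : le a a) :
    monomial a (1 : K) ∈ leadIdeal le I :=
  Ideal.subset_span ⟨_, hI, a, isLeadExp_monomial_sub_monomial hab hba haa, rfl⟩

theorem monomial_mem_leadIdeal_of_sub_mem_of_notMem (htotal : Total le)
    {I : Ideal (MvPolynomial σ K)} (hI : monomial a (1 : K) - monomial b 1 ∈ I)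
    (hb : monomial b (1 : K) ∉ leadIdeal le I) (hab : a ≠ b) :
    monomial a (1 : K) ∈ leadIdeal le I := by
  have hrefl (d : σ →₀ ℕ) : le d d := (htotal d d).elim id id
  rcases htotal a b with hle | hle
  · have hI' : monomial b (1 : K) - monomial a 1 ∈ I := by rwa [← neg_sub, I.neg_mem_iff]
    exact absurd (monomial_mem_leadIdeal_of_sub_mem hI' hab.symm hle (hrefl b)) hb
  · exact monomial_mem_leadIdeal_of_sub_mem hI hab hle (hrefl a)

end Binomial

section CodeIdeal

variable {p n : ℕ}

theorem natCast_toExp [NeZero p] (c : Fin n → ZMod p) (i : Fin n) :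
    ((toExp c i : ℕ) : ZMod p) = c i := by
  simp [toExp]

theorem card_support_toExp (c : Fin n → ZMod p) : (toExp c).support.card = hammingNorm c := by
  unfold hammingNorm
  congr 1
  ext i
  simp [toExp, ZMod.val_eq_zero]

theorem monomial_sub_monomial_mem_codeIdeal (K : Type*) [Field K]
    {C : Submodule (ZMod p) (Fin n → ZMod p)} {a b : Fin n →₀ ℕ}
    (h : (fun i => ((a i : ZMod p) - (b i : ZMod p))) ∈ C) :
    monomial a (1 : K) - monomial b 1 ∈ codeIdeal p K C :=
  Ideal.subset_span (Or.inl ⟨a, b, h, rfl⟩)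

theorem monomial_toExp_add_sub_mem_codeIdeal [NeZero p] (K : Type*) [Field K]
    {C : Submodule (ZMod p) (Fin n → ZMod p)} {c : Fin n → ZMod p} (hc : c ∈ C)
    (e : Fin n → ZMod p) :
    monomial (toExp (c + e)) (1 : K) - monomial (toExp e) 1 ∈ codeIdeal p K C := by
  apply monomial_sub_monomial_mem_codeIdeal
  simpa [natCast_toExp] using hc

end CodeIdeal

theorem stmt_19_general (p : ℕ) (hp : p.Prime) (K : Type*) [Field K] (n t : ℕ)
    (C : Submodule (ZMod p) (Fin n → ZMod p))
    (le : (Fin n →₀ ℕ) → (Fin n →₀ ℕ) → Prop)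
    (htotal : Total le)
    (w c e : Fin n → ZMod p) (hc : c ∈ C) (hw : w = c + e)
    (he : hammingNorm e ≤ t)
    (f : Fin n →₀ ℕ)
    (hrem : monomial (toExp w) (1 : K) - monomial f 1 ∈ codeIdeal p K C)
    (hstd : monomial f (1 : K) ∉ leadIdeal le (codeIdeal p K C))
    (hwf : t < f.support.card) :
    monomial (toExp e) (1 : K) ∈ leadIdeal le (codeIdeal p K C) := by
  have : NeZero p := ⟨hp.ne_zero⟩
  have hef : monomial (toExp e) (1 : K) - monomial f 1 ∈ codeIdeal p K C := by
    rw [← sub_sub_sub_cancel_left _ _ (monomial (toExp w) (1 : K))]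
    exact Ideal.sub_mem _ hrem (hw ▸ monomial_toExp_add_sub_mem_codeIdeal K hc e)
  have hne : toExp e ≠ f := by
    rintro rfl
    rw [card_support_toExp] at hwf
    omega
  exact monomial_mem_leadIdeal_of_sub_mem_of_notMem htotal hef hstd hne

/-- if w = c + e with c ∈ C, wt(e) ≤ t, and the remainder of x^w on
division by a Gröbner basis of I(C) is a standard monomial x^f with wt(f) > t,
then x^e ∈ lt_≻(I(C)). -/
theorem stmt_19 (p : ℕ) (hp : p.Prime) (K : Type*) [Field K] (n t : ℕ)
    (C : Submodule (ZMod p) (Fin n → ZMod p))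
    (le : (Fin n →₀ ℕ) → (Fin n →₀ ℕ) → Prop)
    (hrefl : Reflexive le) (htrans : Transitive le)
    (hantisymm : AntiSymmetric le) (htotal : Total le)
    (hzero : ∀ a : Fin n →₀ ℕ, le 0 a)
    (hadd : ∀ a b c : Fin n →₀ ℕ, le a b → le (a + c) (b + c))
    (w c e : Fin n → ZMod p) (hc : c ∈ C) (hw : w = c + e)
    (he : hammingNorm e ≤ t)
    (f : Fin n →₀ ℕ)
    (hrem : monomial (toExp w) (1 : K) - monomial f 1 ∈ codeIdeal p K C)
    (hstd : monomial f (1 : K) ∉ leadIdeal le (codeIdeal p K C))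
    (hwf : t < f.support.card) :
    monomial (toExp e) (1 : K) ∈ leadIdeal le (codeIdeal p K C) :=
  stmt_19_general p hp K n t C le htotal w c e hc hw he f hrem hstd hwf
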